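/- arXiv:0801.4322 — 6 statements merged into one kernel-verified Lean document; each statement's English description precedes it below -/
import Mathlib

section
/- Let K ≥ 2 and d be positive integers with K + c − d > 0 for some 1 ≤ c ≤ d, and let λ ∈ ℝ^d be nonnegative. For a subset 𝒞 ⊆ {1,…,d} with |𝒞| = c and K + c − d > 0, define Δ_𝒞 = K/((K²−1)(K+c−d)) · [ (∑_{i∈𝒞} √λ_i)² − (K+c−d)·∑_{i∈𝒞} λ_i ]. Suppose 𝒞₁ = 𝒞₀ ∪ {n₁} and 𝒞₂ = 𝒞₀ ∪ {n₂} where n₁, n₂ ∉ 𝒞₀, |𝒞₁| = |𝒞₂| = c, λ_{n₁} > λ_{n₂} > 0, and ∑_{i∈𝒞₁} √λ_i ≤ (K+c−d)·min{√λ_i : i ∉ 𝒞₁}. Then ∑_{i∈𝒞₂} √λ_i ≤ (K+c−d)·min{√λ_i : i ∉ 𝒞₂} and Δ_{𝒞₂} ≥ Δ_{𝒞₁}. -/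
/-- Exchanging an element of the face-index set for one with a smaller
Schmidt coefficient preserves the stationary-point condition and does not decrease
`Δ_𝒞`. -/
theorem stmt1 (d K c : ℕ) (hK : 2 ≤ K) (hc : 1 ≤ c) (hcd : c ≤ d)
    (hKcd : 1 ≤ (K:ℝ) + c - d)
    (lam : Fin d → ℝ) (hnn : ∀ i, 0 ≤ lam i)
    (C0 : Finset (Fin d)) (n1 n2 : Fin d)
    (hn1 : n1 ∉ C0) (hn2 : n2 ∉ C0)
    (hcard1 : (insert n1 C0).card = c) (hcard2 : (insert n2 C0).card = c)
    (hlt : lam n2 < lam n1) (hpos : 0 < lam n2)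
    (hstat : ∀ j, j ∉ insert n1 C0 →
      ∑ i ∈ insert n1 C0, Real.sqrt (lam i) ≤ ((K:ℝ) + c - d) * Real.sqrt (lam j))
    (ΔC : Finset (Fin d) → ℝ)
    (hΔ : ∀ C : Finset (Fin d), ΔC C = (K:ℝ) / (((K:ℝ)^2 - 1) * ((K:ℝ) + c - d)) *
      ((∑ i ∈ C, Real.sqrt (lam i))^2 - ((K:ℝ) + c - d) * ∑ i ∈ C, lam i)) :
    (∀ j, j ∉ insert n2 C0 →
      ∑ i ∈ insert n2 C0, Real.sqrt (lam i) ≤ ((K:ℝ) + c - d) * Real.sqrt (lam j)) ∧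
    ΔC (insert n1 C0) ≤ ΔC (insert n2 C0) := by

  have hne : n1 ≠ n2 := by rintro rfl; exact lt_irrefl _ hlt
  have hb : 0 < Real.sqrt (lam n2) := Real.sqrt_pos.2 hpos
  have hab : Real.sqrt (lam n2) ≤ Real.sqrt (lam n1) := Real.sqrt_le_sqrt hlt.le
  have hκ : (0:ℝ) ≤ (K:ℝ) + c - d := by linarith
  have hsum1 : ∑ i ∈ insert n1 C0, Real.sqrt (lam i)
      = Real.sqrt (lam n1) + ∑ i ∈ C0, Real.sqrt (lam i) := Finset.sum_insert hn1
  have hsum2 : ∑ i ∈ insert n2 C0, Real.sqrt (lam i)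
      = Real.sqrt (lam n2) + ∑ i ∈ C0, Real.sqrt (lam i) := Finset.sum_insert hn2
  have hkey : Real.sqrt (lam n1) + ∑ i ∈ C0, Real.sqrt (lam i)
      ≤ ((K:ℝ) + c - d) * Real.sqrt (lam n2) := by
    have h := hstat n2 (by simp [Finset.mem_insert, hne.symm, hn2])
    rwa [hsum1] at h
  constructor
  · intro j hj
    rw [hsum2]
    by_cases hjn : j = n1
    · subst hjn
      nlinarith [mul_le_mul_of_nonneg_left hab hκ]
    · have hj1 : j ∉ insert n1 C0 := by
        simp only [Finset.mem_insert] at hj ⊢; tauto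
      have h := hstat j hj1
      rw [hsum1] at h
      linarith
  · rw [hΔ, hΔ]
    have hcoef : 0 ≤ (K:ℝ) / (((K:ℝ)^2 - 1) * ((K:ℝ) + c - d)) := by
      have hK2 : (2:ℝ) ≤ (K:ℝ) := by exact_mod_cast hK
      apply div_nonneg (by linarith)
      apply mul_nonneg (by nlinarith) (by linarith)
    apply mul_le_mul_of_nonneg_left _ hcoef
    rw [hsum1, hsum2, Finset.sum_insert hn1, Finset.sum_insert hn2]
    have h1 : Real.sqrt (lam n1) ^ 2 = lam n1 := Real.sq_sqrt (hnn n1)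
    have h2 : Real.sqrt (lam n2) ^ 2 = lam n2 := Real.sq_sqrt (hpos.le)
    nlinarith [mul_le_mul_of_nonneg_left hab hκ,
      mul_nonneg hκ (sub_nonneg.2 hab),
      mul_le_mul_of_nonneg_right hkey (sub_nonneg.2 hab)]
end

section
/- Let λ ∈ ℝ³ be a probability vector with 0 < λ₁ ≤ λ₂ ≤ λ₃ and √λ₁ + √λ₂ ≤ √λ₃. Then the 3×3 real symmetric matrix P₂ = (1/9)·[[3λ₁ + 4√(λ₂λ₃), −3√(λ₁λ₂), −3√(λ₁λ₃)], [−3√(λ₁λ₂), 3λ₂ + 4√(λ₂λ₃), −√(λ₂λ₃)], [−3√(λ₁λ₃), −√(λ₂λ₃), 3λ₃]] is positive semidefinite. -/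
/-!
Write `a = √λ₁`, `b = √λ₂`, `c = √λ₃`, so that the entries of `9 P₂` are quadratic in `a, b, c`.
Its quadratic form `Q` has the sum-of-squares decomposition
`3 Q = (3cz - 3ax - by)² + 12b (a (x - y)² + (c - a)(x² + y²)) + 8b²y²`,
every term of which is nonnegative as soon as `0 ≤ a ≤ c` and `0 ≤ b`.
-/

theorem Matrix.posSemidef_fin_three_of_quadForm_nonneg {p q r s t u : ℝ}
    (h : ∀ x y z : ℝ, 0 ≤ p*x^2 + q*y^2 + r*z^2 + 2*s*x*y + 2*t*x*z + 2*u*y*z) :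
    (!![p, s, t; s, q, u; t, u, r]).PosSemidef := by
  rw [posSemidef_iff_dotProduct_mulVec]
  refine ⟨?_, fun v => ?_⟩
  · ext i j
    fin_cases i <;> fin_cases j <;> rfl
  · simp only [star_trivial, cons_mulVec, vec3_dotProduct, cons_val_zero, cons_val_one, cons_val,
      empty_mulVec]
    linarith [h (v 0) (v 1) (v 2)]

theorem posSemidef_P₂_in_sqrt_coords {a b c : ℝ} (ha : 0 ≤ a) (hb : 0 ≤ b) (hac : a ≤ c) :
    (!![3*a^2 + 4*(b*c), -3*(a*b), -3*(a*c);
       -3*(a*b), 3*b^2 + 4*(b*c), -(b*c);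
       -3*(a*c), -(b*c), 3*c^2]).PosSemidef := by
  refine Matrix.posSemidef_fin_three_of_quadForm_nonneg fun x y z => ?_
  have hca : 0 ≤ c - a := sub_nonneg.mpr hac
  linarith [sq_nonneg (3*c*z - 3*a*x - b*y), mul_nonneg hb (mul_nonneg ha (sq_nonneg (x - y))),
    mul_nonneg hb (mul_nonneg hca (add_nonneg (sq_nonneg x) (sq_nonneg y))),
    mul_nonneg (sq_nonneg b) (sq_nonneg y)]

theorem stmt2_general (l1 l2 l3 : ℝ) (h1 : 0 < l1) (h12 : l1 ≤ l2) (h23 : l2 ≤ l3) :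
    (((1:ℝ)/9) • !![3*l1 + 4*Real.sqrt (l2*l3), -3*Real.sqrt (l1*l2), -3*Real.sqrt (l1*l3);
       -3*Real.sqrt (l1*l2), 3*l2 + 4*Real.sqrt (l2*l3), -Real.sqrt (l2*l3);
       -3*Real.sqrt (l1*l3), -Real.sqrt (l2*l3), 3*l3]).PosSemidef := by
  have hsq : ∀ l : ℝ, 0 ≤ l → ∃ a, 0 ≤ a ∧ l = a^2 :=
    fun l hl => ⟨√l, Real.sqrt_nonneg l, (Real.sq_sqrt hl).symm⟩
  obtain ⟨c, hc, rfl⟩ := hsq l3 (by linarith)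
  obtain ⟨b, hb, rfl⟩ := hsq l2 (by linarith)
  obtain ⟨a, ha, rfl⟩ := hsq l1 h1.le
  have hac : a ≤ c := (pow_le_pow_iff_left₀ ha hc two_ne_zero).mp (h12.trans h23)
  have hsqrt : ∀ x y : ℝ, 0 ≤ x → 0 ≤ y → √(x^2 * y^2) = x * y :=
    fun x y hx hy => by rw [← mul_pow, Real.sqrt_sq (mul_nonneg hx hy)]
  rw [hsqrt a b ha hb, hsqrt a c ha hc, hsqrt b c hb hc]
  exact (posSemidef_P₂_in_sqrt_coords ha hb hac).smul (by norm_num)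

/-- The matrix `P₂` from the rank-three construction is positive
semidefinite. -/
theorem stmt2 (l1 l2 l3 : ℝ) (h1 : 0 < l1) (h12 : l1 ≤ l2) (h23 : l2 ≤ l3)
    (hsum : l1 + l2 + l3 = 1)
    (hs : Real.sqrt l1 + Real.sqrt l2 ≤ Real.sqrt l3) :
    (((1:ℝ)/9) • !![3*l1 + 4*Real.sqrt (l2*l3), -3*Real.sqrt (l1*l2), -3*Real.sqrt (l1*l3);
       -3*Real.sqrt (l1*l2), 3*l2 + 4*Real.sqrt (l2*l3), -Real.sqrt (l2*l3);
       -3*Real.sqrt (l1*l3), -Real.sqrt (l2*l3), 3*l3]).PosSemidef :=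
  stmt2_general l1 l2 l3 h1 h12 h23
end

section
/- Let λ ∈ ℝ^d be a probability vector with strictly positive entries sorted in nondecreasing order, and let K ≥ 2 be an integer with d ≥ K. Define c* to be the smallest c ∈ {1+d−K, …, d−1} satisfying (∑_{i=1}^c √λ_i)/(K+c−d) ≤ √λ_{c+1}, or c* = d if no such c exists. If (∑_{i=1}^d λ_i^{1/2})² = K (i.e. S_{1/2}(λ) = log K), then T₁(K;λ) := (K·(∑_i √λ_i)² − 1)/(K²−1) + K/((K²−1)(K+c*−d)) · [ (∑_{i=1}^{c*} √λ_i)² − (K+c*−d)·∑_{i=1}^{c*} λ_i ] satisfies T₁(K;λ) ≥ 1 + K·(√(K·λ_d) − 1)²/((K²−1)(K−1)), and hence T₁(K;λ) > 1 unless λ is the uniform distribution on K elements (which requires d = K). -/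
/-- Auxiliary purely algebraic inequality. -/
lemma stmt3_aux (A D M t m p : ℝ) (hm : 1 ≤ m) (hp : 0 ≤ p) (hM : 0 ≤ M)
    (hmp : m + p = (A+D+t)^2 - 1) (hCS : D^2 ≤ p*M) :
    m*((A+D+t)*t-1)^2 ≤ ((A+D+t)^2-1)*(A^2 - m*(1 - t^2 - M)) := by
  rcases eq_or_lt_of_le hp with hp0 | hp0
  · have hD : D = 0 := by nlinarith [sq_nonneg D]
    subst hD
    have hm' : m = (A+0+t)^2 - 1 := by rw [← hp0] at hmp; linarith
    have key : ((A+0+t)^2-1)*(A^2 - m*(1 - t^2 - M)) - m*((A+0+t)*t-1)^2 = m^2*M := by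
      rw [hm']; ring
    nlinarith [mul_nonneg (sq_nonneg m) hM]
  · have hpe : m = (A+D+t)^2 - 1 - p := by linarith
    have identity : p * (((A+D+t)^2-1) * (A^2 - m*(1 - t^2 - M)) - m*((A+D+t)*t-1)^2)
        = (p*A - m*D)^2 + ((A+D+t)^2-1)*m*(p*M - D^2) := by
      rw [hpe]; ring
    nlinarith [sq_nonneg (p*A - m*D),
      mul_nonneg (mul_nonneg (show (0:ℝ) ≤ (A+D+t)^2-1 by nlinarith)
        (by linarith : (0:ℝ) ≤ m)) (by linarith : (0:ℝ) ≤ p*M - D^2), hp0]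

/-- If `S_{1/2}(λ) = log K` (i.e. `(∑√λ_i)² = K`) and `d ≥ K`, then the
rank-constrained dual value `T₁(K;λ)` is at least `1 + K(√(Kλ_d)−1)²/((K²−1)(K−1))`,
hence `T₁ > 1` unless `λ` is uniform on `K` elements. (Entries are 0-indexed:
`lam i` is the `(i+1)`-th smallest Schmidt coefficient.) -/
theorem stmt3 (d K : ℕ) (hK : 2 ≤ K) (hdK : K ≤ d)
    (lam : ℕ → ℝ) (hpos : ∀ i < d, 0 < lam i)
    (hsum : ∑ i ∈ Finset.range d, lam i = 1)
    (hmono : ∀ i j, i ≤ j → j < d → lam i ≤ lam j)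
    (cond : ℕ → Prop)
    (hcond : ∀ c, cond c ↔
      (∑ i ∈ Finset.range c, Real.sqrt (lam i)) ≤ ((K:ℝ) + c - d) * Real.sqrt (lam c))
    (cstar : ℕ)
    (hcstar : IsLeast {c | 1 + d - K ≤ c ∧ c ≤ d - 1 ∧ cond c} cstar ∨
      (cstar = d ∧ ∀ c, 1 + d - K ≤ c → c ≤ d - 1 → ¬ cond c))
    (hhalf : (∑ i ∈ Finset.range d, Real.sqrt (lam i))^2 = K)
    (T1 : ℝ)
    (hT1 : T1 = ((K:ℝ) * (∑ i ∈ Finset.range d, Real.sqrt (lam i))^2 - 1) / ((K:ℝ)^2 - 1)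
      + (K:ℝ) / (((K:ℝ)^2 - 1) * ((K:ℝ) + cstar - d)) *
        ((∑ i ∈ Finset.range cstar, Real.sqrt (lam i))^2
          - ((K:ℝ) + cstar - d) * ∑ i ∈ Finset.range cstar, lam i)) :
    1 + (K:ℝ) * (Real.sqrt ((K:ℝ) * lam (d-1)) - 1)^2 / (((K:ℝ)^2 - 1) * ((K:ℝ) - 1)) ≤ T1
    ∧ (¬ (d = K ∧ ∀ i < d, lam i = 1/(K:ℝ)) → 1 < T1) := by
  have hd2 : 2 ≤ d := le_trans hK hdK
  set s : ℕ → ℝ := fun i => Real.sqrt (lam i) with hs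
  have hspos : ∀ i < d, 0 < s i := fun i hi => Real.sqrt_pos.2 (hpos i hi)
  have hsq : ∀ i < d, s i ^ 2 = lam i := fun i hi => Real.sq_sqrt (hpos i hi).le
  set u := ∑ i ∈ Finset.range d, s i with hu'
  have hu : u ^ 2 = K := hhalf
  have hupos : 0 < u := by
    refine Finset.sum_pos (fun i hi => hspos i (Finset.mem_range.1 hi)) ?_
    exact ⟨0, Finset.mem_range.2 (by omega)⟩
  set t := s (d - 1) with ht
  have htd : d - 1 < d := by omega
  have htpos : 0 < t := hspos _ htd
  have htle : ∀ i < d, s i ≤ t :=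
    fun i hi => Real.sqrt_le_sqrt (hmono i (d-1) (by omega) htd)
  have hrt : Real.sqrt (lam (d-1)) = t := rfl
  have hsum2 : ∑ i ∈ Finset.range d, s i ^ 2 = 1 := by
    rw [Finset.sum_congr rfl (fun i hi => hsq i (Finset.mem_range.1 hi))]; exact hsum
  have hK1 : (1:ℝ) < K := by exact_mod_cast (by omega : 1 < K)
  have hK2 : (0:ℝ) < (K:ℝ)^2 - 1 := by nlinarith only [hK1]
  have he : d - 1 + 1 = d := by omega
  -- split sums at d-1
  have hsplit1 : ∑ i ∈ Finset.range d, s i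
      = ∑ i ∈ Finset.range (d-1), s i + s (d-1) := by
    conv_lhs => rw [← he]
    exact Finset.sum_range_succ _ _
  have hsplit2 : ∑ i ∈ Finset.range d, s i ^ 2
      = ∑ i ∈ Finset.range (d-1), s i ^ 2 + s (d-1) ^ 2 := by
    conv_lhs => rw [← he]
    exact Finset.sum_range_succ _ _
  -- rule out cstar = d
  have hleast : IsLeast {c | 1 + d - K ≤ c ∧ c ≤ d - 1 ∧ cond c} cstar := by
    rcases hcstar with h | ⟨hcd, hno⟩
    · exact h
    · exfalso
      have h1 : ¬ cond (d-1) := hno (d-1) (by omega) le_rfl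
      rw [hcond] at h1
      push_neg at h1
      have hcast : ((K:ℝ) + ((d-1 : ℕ):ℝ) - d) = (K:ℝ) - 1 := by
        have : ((d-1 : ℕ):ℝ) = (d:ℝ) - 1 := by
          push_cast [Nat.cast_sub (by omega : 1 ≤ d)]; ring
        rw [this]; ring
      rw [hcast] at h1
      have h3 : (K:ℝ) * t < u := by
        have h2 : ∑ i ∈ Finset.range (d-1), s i = u - t := by
          have h0 := hsplit1
          rw [← hu', ← ht] at h0
          linarith only [h0]
        rw [h2, hrt] at h1
        linarith only [h1]
      have h4 : (1:ℝ) ≤ t * u := by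
        have hb : ∀ i ∈ Finset.range d, s i ^ 2 ≤ t * s i := by
          intro i hi
          have hi' := Finset.mem_range.1 hi
          rw [sq]
          exact mul_le_mul_of_nonneg_right (htle i hi') (hspos i hi').le
        have h5 := Finset.sum_le_sum hb
        rw [hsum2, ← Finset.mul_sum, ← hu'] at h5
        exact h5
      have c1 : (K:ℝ) * t * u < u * u := mul_lt_mul_of_pos_right h3 hupos
      have c2 : (K:ℝ) * 1 ≤ (K:ℝ) * (t * u) :=
        mul_le_mul_of_nonneg_left h4 (by positivity)
      have c3 : u * u = (K:ℝ) := by rw [← hu]; ring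
      linarith only [c1, c2, c3]
  obtain ⟨⟨hc1, hc2, hc3⟩, _⟩ := hleast
  have hcK : d + 1 ≤ K + cstar := by omega
  set m : ℝ := (K:ℝ) + cstar - d with hm
  have hm1 : (1:ℝ) ≤ m := by
    have hc : ((d:ℝ) + 1) ≤ (K:ℝ) + cstar := by exact_mod_cast hcK
    rw [hm]; linarith only [hc]
  have hm0 : (0:ℝ) < m := by linarith only [hm1]
  set A := ∑ i ∈ Finset.range cstar, s i with hA
  set B := ∑ i ∈ Finset.range cstar, s i ^ 2 with hB
  set Ds := ∑ i ∈ Finset.Ico cstar (d-1), s i with hDs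
  set Ms := ∑ i ∈ Finset.Ico cstar (d-1), s i ^ 2 with hMs
  set p : ℝ := ((d - 1 - cstar : ℕ) : ℝ) with hp
  clear_value s u t m A B Ds Ms p
  have hp0 : (0:ℝ) ≤ p := by rw [hp]; positivity
  have hM0 : (0:ℝ) ≤ Ms := by rw [hMs]; positivity
  have hpcast : p = (d:ℝ) - 1 - cstar := by
    rw [hp]
    push_cast [Nat.cast_sub (by omega : cstar ≤ d - 1), Nat.cast_sub (by omega : 1 ≤ d)]
    ring
  have hmp : m + p = (K:ℝ) - 1 := by rw [hm, hpcast]; ring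
  have hADt : A + Ds + t = u := by
    have h3 := Finset.sum_range_add_sum_Ico s (show cstar ≤ d - 1 by omega)
    rw [← hA, ← hDs] at h3
    linarith only [hsplit1, hu', ht, h3]
  have hBval : B = 1 - t^2 - Ms := by
    have h3 := Finset.sum_range_add_sum_Ico (fun i => s i ^ 2) (show cstar ≤ d - 1 by omega)
    rw [← hB, ← hMs] at h3
    have ht2 : t ^ 2 = s (d-1) ^ 2 := by rw [ht]
    linarith only [hsum2, hsplit2, h3, ht2]
  have hCS : Ds ^ 2 ≤ p * Ms := by
    have h1 := Finset.sum_mul_sq_le_sq_mul_sq (Finset.Ico cstar (d-1)) (fun _ => (1:ℝ)) s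
    simp only [one_pow, one_mul, Finset.sum_const, nsmul_eq_mul, Nat.card_Ico] at h1
    rw [← hDs, ← hMs] at h1
    calc Ds ^ 2 ≤ ((d - 1 - cstar : ℕ) : ℝ) * Ms := by linarith only [h1]
      _ = p * Ms := by rw [hp]
  -- the key inequality
  have key : m * (u*t - 1)^2 ≤ ((K:ℝ) - 1) * (A^2 - m * B) := by
    have h0 := stmt3_aux A Ds Ms t m p hm1 hp0 hM0
      (by rw [hADt, hu]; exact hmp) hCS
    rw [hADt, hu, ← hBval] at h0
    exact h0
  -- rewrite T1
  have hBlam : ∑ i ∈ Finset.range cstar, lam i = B := by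
    rw [hB]
    exact Finset.sum_congr rfl (fun i hi => (hsq i (by
      have := Finset.mem_range.1 hi; omega)).symm)
  have hT1' : T1 = 1 + (K:ℝ) / (((K:ℝ)^2 - 1) * m) * (A^2 - m * B) := by
    rw [hT1, hu, hBlam]
    have h1 : ((K:ℝ) * K - 1) / ((K:ℝ)^2 - 1) = 1 := by
      rw [div_eq_one_iff_eq hK2.ne']; ring
    rw [h1]
  -- sqrt(K * lam(d-1)) = u * t
  have huK : u = Real.sqrt K := by
    rw [← hu, Real.sqrt_sq hupos.le]
  have hsqrtKt : Real.sqrt ((K:ℝ) * lam (d-1)) = u * t := by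
    rw [Real.sqrt_mul (by positivity), huK, hrt]
  rw [hsqrtKt]
  have goal1 : (K:ℝ) * (u*t - 1)^2 / (((K:ℝ)^2 - 1) * ((K:ℝ) - 1))
      ≤ (K:ℝ) / (((K:ℝ)^2 - 1) * m) * (A^2 - m * B) := by
    rw [div_mul_eq_mul_div, div_le_div_iff₀
      (mul_pos hK2 (by linarith only [hK1] : (0:ℝ) < (K:ℝ) - 1)) (mul_pos hK2 hm0)]
    have hc : (0:ℝ) ≤ (K:ℝ) * ((K:ℝ)^2 - 1) := by positivity
    calc (K:ℝ) * (u*t - 1)^2 * (((K:ℝ)^2 - 1) * m)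
        = ((K:ℝ) * ((K:ℝ)^2 - 1)) * (m * (u*t - 1)^2) := by ring
      _ ≤ ((K:ℝ) * ((K:ℝ)^2 - 1)) * (((K:ℝ) - 1) * (A^2 - m * B)) :=
          mul_le_mul_of_nonneg_left key hc
      _ = (K:ℝ) * (A^2 - m * B) * (((K:ℝ)^2 - 1) * ((K:ℝ) - 1)) := by ring
  constructor
  · rw [hT1']; linarith only [goal1]
  · intro hne
    rw [hT1']
    have hut : u * t ≠ 1 := by
      intro hut1
      apply hne
      have hK0 : (K:ℝ) ≠ 0 := by positivity
      have hld : lam (d-1) = 1 / K := by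
        have h6 : (K:ℝ) * lam (d-1) = 1 := by
          have e : lam (d-1) = t^2 := by rw [ht]; exact (hsq _ htd).symm
          rw [e, ← hu]
          calc u^2 * t^2 = (u*t)^2 := by ring
            _ = 1 := by rw [hut1]; norm_num
        rw [eq_div_iff hK0]
        linarith only [h6]
      have hle1 : ∀ i < d, lam i ≤ 1 / K := fun i hi =>
        le_trans (hmono i (d-1) (by omega) htd) hld.le
      have hKlam1 : ∀ i < d, (K:ℝ) * lam i ≤ 1 := by
        intro i hi
        have h7 := hle1 i hi
        have h0 : (0:ℝ) < (K:ℝ) := by positivity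
        calc (K:ℝ) * lam i ≤ (K:ℝ) * (1/K) := mul_le_mul_of_nonneg_left h7 h0.le
          _ = 1 := by field_simp
      have hall : ∀ i < d, lam i = 1 / K := by
        by_contra hcon
        push_neg at hcon
        obtain ⟨j, hj, hjne⟩ := hcon
        have hjlt : lam j < 1 / K := lt_of_le_of_ne (hle1 j hj) hjne
        have hptle : ∀ i ∈ Finset.range d, Real.sqrt K * lam i ≤ s i := by
          intro i hi
          have hi' := Finset.mem_range.1 hi
          have ha : (0:ℝ) < s i := hspos i hi'
          have hx : (Real.sqrt K * s i)^2 ≤ 1 := by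
            rw [mul_pow, Real.sq_sqrt (by positivity : (0:ℝ) ≤ (K:ℝ)), hsq i hi']
            exact hKlam1 i hi'
          have hba : Real.sqrt K * s i ≤ 1 := by
            linarith only [hx, sq_nonneg (Real.sqrt K * s i - 1)]
          calc Real.sqrt K * lam i = (Real.sqrt K * s i) * s i := by
                rw [← hsq i hi']; ring
            _ ≤ 1 * s i := mul_le_mul_of_nonneg_right hba ha.le
            _ = s i := one_mul _
        have hptlt : Real.sqrt K * lam j < s j := by
          have ha : (0:ℝ) < s j := hspos j hj
          have hKj : (K:ℝ) * lam j < 1 := by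
            have h0 : (0:ℝ) < (K:ℝ) := by positivity
            have := mul_lt_mul_of_pos_left hjlt h0
            calc (K:ℝ) * lam j < (K:ℝ) * (1/K) := this
              _ = 1 := by field_simp
          have hx : (Real.sqrt K * s j)^2 < 1 := by
            rw [mul_pow, Real.sq_sqrt (by positivity : (0:ℝ) ≤ (K:ℝ)), hsq j hj]
            exact hKj
          have hba : Real.sqrt K * s j < 1 := by
            linarith only [hx, sq_nonneg (Real.sqrt K * s j - 1)]
          calc Real.sqrt K * lam j = (Real.sqrt K * s j) * s j := by
                rw [← hsq j hj]; ring
            _ < 1 * s j := mul_lt_mul_of_pos_right hba ha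
            _ = s j := one_mul _
        have hstrict : ∑ i ∈ Finset.range d, Real.sqrt K * lam i
            < ∑ i ∈ Finset.range d, s i :=
          Finset.sum_lt_sum hptle ⟨j, Finset.mem_range.2 hj, hptlt⟩
        rw [← Finset.mul_sum, hsum, mul_one, ← hu', ← huK] at hstrict
        exact absurd hstrict (lt_irrefl u)
      have hdeq : d = K := by
        have h1 : ∑ i ∈ Finset.range d, lam i = (d:ℝ) * (1/K) := by
          rw [Finset.sum_congr rfl (fun i hi => hall i (Finset.mem_range.1 hi))]
          simp [Finset.sum_const]
        rw [hsum] at h1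
        have h2 : (d:ℝ) = K := by
          rw [mul_one_div, eq_comm, div_eq_one_iff_eq hK0] at h1
          linarith only [h1]
        exact_mod_cast h2
      exact ⟨hdeq, hall⟩
    have hsq2 : 0 < (u*t - 1)^2 :=
      pow_two_pos_of_ne_zero (sub_ne_zero.mpr hut)
    have h1 : 0 < (K:ℝ) * (u*t - 1)^2 / (((K:ℝ)^2 - 1) * ((K:ℝ) - 1)) := by
      apply div_pos
      · positivity
      · exact mul_pos hK2 (by linarith only [hK1])
    linarith only [h1, goal1]
end

section
/- For the probability vector λ = (1/20, 1/20, 1/20, 4/20, 4/20, 9/20), the Rényi entropy at 1/2 equals log 5, i.e. (∑_i √λ_i)² = 5, while for every t with 0 ≤ t < 1/2 the Rényi entropy S_t(λ) = (1/(1−t))·log(∑_i λ_i^t) is strictly greater than log 5 (with S_0(λ) = log 6). -/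
open Real in
lemma key94 (t : ℝ) (ht0 : 0 < t) (ht : t < 1/2) :
    3 < 3 * ((1/4:ℝ))^t + ((9/4:ℝ))^t := by
  set s : ℝ := 1/(2*(1-t)) with hs
  have h1t : 0 < 1 - t := by linarith
  have hs0 : 0 < s := by positivity
  have hconv : ∀ c : ℝ, c ≠ 0 →
      Real.exp (c * (1/2)) < s * Real.exp (c * t) + (1-s) * Real.exp (c * 1) := by
    intro c hc
    have hs1 : s < 1 := by
      rw [hs, div_lt_one (by linarith)]; linarith
    have hxy : c * t ≠ c * 1 := by
      intro h
      have : t = 1 := mul_left_cancel₀ hc h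
      linarith
    have H := strictConvexOn_exp.2 (Set.mem_univ (c*t)) (Set.mem_univ (c*1)) hxy hs0
      (by linarith : (0:ℝ) < 1 - s) (by ring)
    simp only [smul_eq_mul] at H
    have hst : s * t + (1 - s) = 1/2 := by
      rw [hs]; field_simp; ring
    have harg : s * (c * t) + (1-s) * (c * 1) = c * (1/2) := by
      linear_combination c * hst
    rwa [harg] at H
  have e1 : ∀ u : ℝ, ((1/4:ℝ))^u = Real.exp (Real.log (1/4) * u) :=
    fun u => Real.rpow_def_of_pos (by norm_num) u
  have e2 : ∀ u : ℝ, ((9/4:ℝ))^u = Real.exp (Real.log (9/4) * u) :=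
    fun u => Real.rpow_def_of_pos (by norm_num) u
  have hc1 : Real.log (1/4) ≠ 0 := by
    intro h; rw [Real.log_eq_zero] at h; norm_num at h
  have hc2 : Real.log (9/4) ≠ 0 := by
    intro h; rw [Real.log_eq_zero] at h; norm_num at h
  have H1 := hconv _ hc1
  have H2 := hconv _ hc2
  rw [← e1, ← e1, ← e1] at H1
  rw [← e2, ← e2, ← e2] at H2
  have v1 : ((1/4:ℝ))^((1:ℝ)/2) = 1/2 := by
    rw [show (1/4:ℝ) = (1/2)^(2:ℕ) by norm_num, ← Real.rpow_natCast ((1/2):ℝ) 2,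
      ← Real.rpow_mul (by norm_num)]
    norm_num
  have v2 : ((9/4:ℝ))^((1:ℝ)/2) = 3/2 := by
    rw [show (9/4:ℝ) = (3/2)^(2:ℕ) by norm_num, ← Real.rpow_natCast ((3/2):ℝ) 2,
      ← Real.rpow_mul (by norm_num)]
    norm_num
  rw [v1, Real.rpow_one] at H1
  rw [v2, Real.rpow_one] at H2
  nlinarith [H1, H2, hs0]

/-- For `λ = (1/20,1/20,1/20,4/20,4/20,9/20)`, `S_{1/2}(λ) = log 5`
(i.e. `(∑√λ_i)² = 5`), while `S_t(λ) > log 5` for all `0 ≤ t < 1/2`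
(for `t = 0`, `S_0(λ) = log 6 > log 5`). -/
theorem stmt5 (lam : Fin 6 → ℝ)
    (hlam : lam = ![1/20, 1/20, 1/20, 4/20, 4/20, 9/20]) :
    ((∑ i, Real.sqrt (lam i))^2 = 5) ∧
    (∀ t : ℝ, 0 < t → t < 1/2 →
      Real.logb 2 5 < (1/(1-t)) * Real.logb 2 (∑ i, (lam i) ^ t)) ∧
    Real.logb 2 5 < Real.logb 2 6 := by
  subst hlam
  refine ⟨?_, ?_, ?_⟩
  · rw [Fin.sum_univ_six,
      show (![1/20, 1/20, 1/20, 4/20, 4/20, 9/20] : Fin 6 → ℝ) 5 = 9/20 from rfl]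
    simp only [Matrix.cons_val_zero, Matrix.cons_val_one, Matrix.head_cons,
      Matrix.cons_val_two, Matrix.tail_cons, Matrix.cons_val_three,
      Matrix.cons_val_four, Matrix.cons_val_fin_one]
    have s1 : Real.sqrt (1/20) * Real.sqrt (1/20) = 1/20 :=
      Real.mul_self_sqrt (by norm_num)
    have s2 : Real.sqrt (4/20) * Real.sqrt (4/20) = 4/20 :=
      Real.mul_self_sqrt (by norm_num)
    have s3 : Real.sqrt (9/20) * Real.sqrt (9/20) = 9/20 :=
      Real.mul_self_sqrt (by norm_num)
    have c12 : Real.sqrt (1/20) * Real.sqrt (4/20) = 1/10 := by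
      rw [← Real.sqrt_mul (by norm_num), show (1/20:ℝ) * (4/20) = (1/10)^2 by norm_num]
      exact Real.sqrt_sq (by norm_num)
    have c13 : Real.sqrt (1/20) * Real.sqrt (9/20) = 3/20 := by
      rw [← Real.sqrt_mul (by norm_num), show (1/20:ℝ) * (9/20) = (3/20)^2 by norm_num]
      exact Real.sqrt_sq (by norm_num)
    have c23 : Real.sqrt (4/20) * Real.sqrt (9/20) = 3/10 := by
      rw [← Real.sqrt_mul (by norm_num), show (4/20:ℝ) * (9/20) = (3/10)^2 by norm_num]
      exact Real.sqrt_sq (by norm_num)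
    nlinarith [s1, s2, s3, c12, c13, c23]
  · intro t ht0 ht
    have h1t : 0 < 1 - t := by linarith
    have h4 : (0:ℝ) < (4:ℝ)^t := Real.rpow_pos_of_pos (by norm_num) t
    have h5 : (0:ℝ) < (5:ℝ)^t := Real.rpow_pos_of_pos (by norm_num) t
    have h20 : (0:ℝ) < (20:ℝ)^t := Real.rpow_pos_of_pos (by norm_num) t
    have hk := key94 t ht0 ht
    have hm : 3 * (4:ℝ)^t < 3 + (9:ℝ)^t := by
      have e1 : ((1/4:ℝ))^t * (4:ℝ)^t = 1 := by
        rw [← Real.mul_rpow (by norm_num) (by norm_num)]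
        norm_num
      have e2 : ((9/4:ℝ))^t * (4:ℝ)^t = (9:ℝ)^t := by
        rw [← Real.mul_rpow (by norm_num) (by norm_num)]
        norm_num
      nlinarith [mul_lt_mul_of_pos_right hk h4]
    have hsum : ∑ i, (![1/20, 1/20, 1/20, 4/20, 4/20, 9/20] : Fin 6 → ℝ) i ^ t
        = (3 + 2*(4:ℝ)^t + (9:ℝ)^t) / (20:ℝ)^t := by
      rw [Fin.sum_univ_six,
        show (![1/20, 1/20, 1/20, 4/20, 4/20, 9/20] : Fin 6 → ℝ) 5 = 9/20 from rfl]
      simp only [Matrix.cons_val_zero, Matrix.cons_val_one, Matrix.head_cons,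
        Matrix.cons_val_two, Matrix.tail_cons, Matrix.cons_val_three,
        Matrix.cons_val_four, Matrix.cons_val_fin_one]
      rw [Real.div_rpow (by norm_num : (0:ℝ) ≤ 1) (by norm_num : (0:ℝ) ≤ 20),
        Real.div_rpow (by norm_num : (0:ℝ) ≤ 4) (by norm_num : (0:ℝ) ≤ 20),
        Real.div_rpow (by norm_num : (0:ℝ) ≤ 9) (by norm_num : (0:ℝ) ≤ 20),
        Real.one_rpow]
      field_simp
      ring
    rw [hsum]
    have hlt : (5:ℝ)^(1-t) < (3 + 2*(4:ℝ)^t + (9:ℝ)^t) / (20:ℝ)^t := by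
      rw [lt_div_iff₀ h20]
      have e20 : (20:ℝ)^t = (4:ℝ)^t * (5:ℝ)^t := by
        rw [← Real.mul_rpow (by norm_num) (by norm_num)]; norm_num
      have e5 : (5:ℝ)^(1-t) * (5:ℝ)^t = 5 := by
        rw [← Real.rpow_add (by norm_num)]; norm_num
      calc (5:ℝ)^(1-t) * (20:ℝ)^t = 5 * (4:ℝ)^t := by rw [e20]; nlinarith [e5]
        _ < 3 + 2*(4:ℝ)^t + (9:ℝ)^t := by nlinarith [hm]
    have hpos : (0:ℝ) < (5:ℝ)^(1-t) := Real.rpow_pos_of_pos (by norm_num) _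
    have hlog := Real.logb_lt_logb (by norm_num : (1:ℝ) < 2) hpos hlt
    have hlb : Real.logb 2 ((5:ℝ)^(1-t)) = (1-t) * Real.logb 2 5 := by
      rw [Real.logb, Real.logb, Real.log_rpow (by norm_num)]
      ring
    rw [hlb] at hlog
    rw [one_div, inv_mul_eq_div, lt_div_iff₀ h1t]
    linarith [hlog]
  · exact Real.logb_lt_logb (by norm_num) (by norm_num) (by norm_num)
end

section
/- Let λ ∈ ℝ^d be a probability vector with λ₁^↓ its largest entry, and suppose F is a Hermitian operator on ℂ^d ⊗ ℂ^d with ρ_λ ≤ F ≤ 𝟙, where ρ_λ = ∑_{i,j} √(λ_i λ_j)|ii⟩⟨jj|. Then the operator norm of the partial transpose satisfies ‖F^Γ‖_∞ ≥ λ₁^↓, and equality is achieved by F = ρ_λ. (Key step: for F = ρ_λ + A with A ≥ 0, ⟨11|F^Γ|11⟩ = λ₁^↓ + ⟨11|A|11⟩ ≥ λ₁^↓, using that |11⟩⟨11|^Γ = |11⟩⟨11| and the Schmidt basis is ordered so λ₁ = λ₁^↓.) -/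
open scoped ComplexOrder

/-- The basis vector `|ij⟩` of `ℂ^d ⊗ ℂ^d`. -/
def ketC {d : ℕ} (i j : Fin d) : Fin d × Fin d → ℂ := fun p => if p = (i, j) then 1 else 0

/-- Partial transpose: `(|ij⟩⟨kl|)^Γ = |il⟩⟨kj|`. -/
def ptransC {d : ℕ} (M : Matrix (Fin d × Fin d) (Fin d × Fin d) ℂ) :
    Matrix (Fin d × Fin d) (Fin d × Fin d) ℂ :=
  fun p q => M (p.1, q.2) (q.1, p.2)

/-!
Partial transposition fixes every diagonal entry, so
`⟨11|F^Γ|11⟩ = ⟨11|F|11⟩ = λ₁ + ⟨11|F - ρ_λ|11⟩ ≥ λ₁`, and no matrix entry exceeds the operator norm.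
Conversely `ρ_λ^Γ = D S`, where `S` is the swap permutation `|ij⟩ ↦ |ji⟩` and `D` is diagonal with
entries `√(λᵢ λⱼ) ≤ λ₁`, so `‖ρ_λ^Γ‖∞ ≤ λ₁`.
-/

open scoped Matrix.Norms.L2Operator

namespace Matrix

theorem norm_apply_le_l2_opNorm {m n 𝕜 : Type*} [Fintype m] [Fintype n] [DecidableEq n]
    [RCLike 𝕜] (A : Matrix m n 𝕜) (i : m) (j : n) : ‖A i j‖ ≤ ‖A‖ := by
  have hcol : A i j = (A *ᵥ Pi.single j 1) i := by simp
  calc ‖A i j‖ = ‖(WithLp.toLp 2 (A *ᵥ Pi.single j 1) : EuclideanSpace 𝕜 m) i‖ := by rw [hcol]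
    _ ≤ ‖(WithLp.toLp 2 (A *ᵥ Pi.single j 1) : EuclideanSpace 𝕜 m)‖ := PiLp.norm_apply_le _ _
    _ ≤ ‖A‖ * ‖(WithLp.toLp 2 (Pi.single j 1) : EuclideanSpace 𝕜 n)‖ :=
        A.l2_opNorm_mulVec (WithLp.toLp 2 (Pi.single j 1))
    _ = ‖A‖ := by simp

end Matrix

theorem ptransC_apply_self {d : ℕ} (M : Matrix (Fin d × Fin d) (Fin d × Fin d) ℂ)
    (p : Fin d × Fin d) : ptransC M p p = M p p := rfl

theorem sum_smul_vecMulVec_ketC_apply {d : ℕ} (c : Fin d → Fin d → ℂ) (a b e f : Fin d) :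
    (∑ i, ∑ j, c i j • Matrix.vecMulVec (ketC i i) (ketC j j)) (a, b) (e, f) =
      if a = b ∧ e = f then c a e else 0 := by
  simp only [Matrix.sum_apply, Matrix.smul_apply, Matrix.vecMulVec_apply, ketC, Prod.mk.injEq,
    smul_eq_mul]
  split_ifs with h
  · obtain ⟨rfl, rfl⟩ := h
    simp
  · refine Finset.sum_eq_zero fun i _ => Finset.sum_eq_zero fun j _ => ?_
    grind

theorem ptransC_sum_smul_vecMulVec_ketC {d : ℕ} (c : Fin d → Fin d → ℂ) :
    ptransC (∑ i, ∑ j, c i j • Matrix.vecMulVec (ketC i i) (ketC j j)) =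
      Matrix.diagonal (fun p => c p.1 p.2) *
        Equiv.Perm.permMatrix ℂ (Equiv.prodComm (Fin d) (Fin d)) := by
  ext ⟨a, b⟩ ⟨e, f⟩
  rw [ptransC, sum_smul_vecMulVec_ketC_apply, Matrix.diagonal_mul]
  simp only [PEquiv.toMatrix_apply, Equiv.toPEquiv_apply, Equiv.prodComm_apply,
    Prod.swap_prod_mk, Option.mem_def, Option.some.injEq, Prod.mk.injEq, mul_ite, mul_one,
    mul_zero]
  grind

theorem l2_opNorm_ptransC_sum_smul_vecMulVec_ketC_le {d : ℕ} (c : Fin d → Fin d → ℂ) {C : ℝ}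
    (hC : 0 ≤ C) (hc : ∀ i j, ‖c i j‖ ≤ C) :
    ‖ptransC (∑ i, ∑ j, c i j • Matrix.vecMulVec (ketC i i) (ketC j j))‖ ≤ C := by
  rw [ptransC_sum_smul_vecMulVec_ketC]
  calc _ ≤ ‖(Matrix.diagonal fun p : Fin d × Fin d => c p.1 p.2)‖ *
        ‖Equiv.Perm.permMatrix ℂ (Equiv.prodComm (Fin d) (Fin d))‖ := Matrix.l2_opNorm_mul _ _
    _ ≤ C * 1 := by
        gcongr
        · rw [Matrix.l2_opNorm_diagonal]
          exact (pi_norm_le_iff_of_nonneg hC).2 fun p => hc p.1 p.2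
        · exact Matrix.permMatrix_l2_opNorm_le _
    _ = C := mul_one C

theorem re_apply_self_le_l2_opNorm_ptransC {d : ℕ}
    {F ρ : Matrix (Fin d × Fin d) (Fin d × Fin d) ℂ} (hF : (F - ρ).PosSemidef)
    (p : Fin d × Fin d) : (ρ p p).re ≤ ‖ptransC F‖ :=
  calc (ρ p p).re ≤ (F p p).re := by
        have hdiag := hF.diag_nonneg (i := p)
        rw [Matrix.sub_apply, sub_nonneg, Complex.le_def] at hdiag
        exact hdiag.1
    _ ≤ ‖F p p‖ := Complex.re_le_norm _
    _ = ‖ptransC F p p‖ := by rw [ptransC_apply_self]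
    _ ≤ ‖ptransC F‖ := Matrix.norm_apply_le_l2_opNorm _ _ _

theorem stmt11_general (d : ℕ) (hd : 0 < d) (lam : Fin d → ℝ)
    (hnn : ∀ i, 0 ≤ lam i)
    (hsorted : ∀ i j : Fin d, i ≤ j → lam j ≤ lam i)
    (rho : Matrix (Fin d × Fin d) (Fin d × Fin d) ℂ)
    (hrho : rho = ∑ i, ∑ j,
      (Real.sqrt (lam i * lam j) : ℂ) • Matrix.vecMulVec (ketC i i) (ketC j j))
    (F : Matrix (Fin d × Fin d) (Fin d × Fin d) ℂ)
    (hFlow : (F - rho).PosSemidef) :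
    lam ⟨0, hd⟩ ≤ ‖Matrix.toEuclideanCLM (𝕜 := ℂ) (ptransC F)‖ ∧
    ‖Matrix.toEuclideanCLM (𝕜 := ℂ) (ptransC rho)‖ = lam ⟨0, hd⟩ := by
  simp only [Matrix.l2_opNorm_toEuclideanCLM]
  set z : Fin d := ⟨0, hd⟩
  have hmax : ∀ i, lam i ≤ lam z := fun i => hsorted z i (Nat.zero_le i)
  have hrho_zz : (rho (z, z) (z, z)).re = lam z := by
    rw [hrho, sum_smul_vecMulVec_ketC_apply]
    simp [Real.sqrt_mul_self (hnn z)]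
  have lower : ∀ G, (G - rho).PosSemidef → lam z ≤ ‖ptransC G‖ := fun G hG =>
    hrho_zz ▸ re_apply_self_le_l2_opNorm_ptransC hG (z, z)
  have upper : ‖ptransC rho‖ ≤ lam z := by
    rw [hrho]
    refine l2_opNorm_ptransC_sum_smul_vecMulVec_ketC_le _ (hnn z) fun i j => ?_
    rw [Complex.norm_real, Real.norm_of_nonneg (Real.sqrt_nonneg _), ← Real.sqrt_mul_self (hnn z)]
    exact Real.sqrt_le_sqrt (mul_le_mul (hmax i) (hmax j) (hnn j) (hnn z))
  exact ⟨lower F hFlow, le_antisymm upper (lower rho (by simpa using Matrix.PosSemidef.zero))⟩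

/-- If `ρ_λ ≤ F ≤ 𝟙` (with `λ` ordered nonincreasingly, so `λ₁^↓ = lam 0`),
then the operator norm of `F^Γ` is at least `λ₁^↓`, with equality for `F = ρ_λ`. -/
theorem stmt11 (d : ℕ) (hd : 0 < d) (lam : Fin d → ℝ)
    (hnn : ∀ i, 0 ≤ lam i) (hsum : ∑ i, lam i = 1)
    (hsorted : ∀ i j : Fin d, i ≤ j → lam j ≤ lam i)
    (rho : Matrix (Fin d × Fin d) (Fin d × Fin d) ℂ)
    (hrho : rho = ∑ i, ∑ j,
      (Real.sqrt (lam i * lam j) : ℂ) • Matrix.vecMulVec (ketC i i) (ketC j j))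
    (F : Matrix (Fin d × Fin d) (Fin d × Fin d) ℂ) (hF : F.IsHermitian)
    (hFlow : (F - rho).PosSemidef) (hFup : ((1 : Matrix (Fin d × Fin d) (Fin d × Fin d) ℂ) - F).PosSemidef) :
    lam ⟨0, hd⟩ ≤ ‖Matrix.toEuclideanCLM (𝕜 := ℂ) (ptransC F)‖ ∧
    ‖Matrix.toEuclideanCLM (𝕜 := ℂ) (ptransC rho)‖ = lam ⟨0, hd⟩ :=
  stmt11_general d hd lam hnn hsorted rho hrho F hFlow
end

section
/- Let σ_{ij} and α_{ij} be the operators on ℂ^d ⊗ ℂ^d defined by σ_{ij} = (|ij⟩+|ji⟩)(⟨ij|+⟨ji|)/2 for i ≠ j, σ_{ii} = |ii⟩⟨ii|, α_{ij} = (|ij⟩−|ji⟩)(⟨ij|−⟨ji|)/2, and define the map Π(τ) = ∑_{i≥j} σ_{ij} τ σ_{ij} + ∑_{i>j} α_{ij} τ α_{ij}. Then for every positive semidefinite τ, the operator Π(τ^Γ)^Γ is positive semidefinite; explicitly Π(τ^Γ)^Γ = (1/2)∑_{i≠j} ⟨ij|τ|ij⟩(|ij⟩⟨ij| + |ji⟩⟨ji|)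 + (1/2)·D(τ + τ*)D, where D = ∑_i |ii⟩⟨ii| and τ* is the entrywise complex conjugate in the product basis. -/
open scoped ComplexOrder

/-- `σ_{ij} = (|ij⟩+|ji⟩)(⟨ij|+⟨ji|)/2` for `i ≠ j`, `σ_{ii} = |ii⟩⟨ii|`. -/
noncomputable def sigmaOpC {d : ℕ} (i j : Fin d) : Matrix (Fin d × Fin d) (Fin d × Fin d) ℂ :=
  if i = j then Matrix.vecMulVec (ketC i i) (ketC i i)
  else (1/2 : ℂ) • Matrix.vecMulVec (ketC i j + ketC j i) (ketC i j + ketC j i)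

/-- `α_{ij} = (|ij⟩−|ji⟩)(⟨ij|−⟨ji|)/2`. -/
noncomputable def alphaOpC {d : ℕ} (i j : Fin d) : Matrix (Fin d × Fin d) (Fin d × Fin d) ℂ :=
  (1/2 : ℂ) • Matrix.vecMulVec (ketC i j - ketC j i) (ketC i j - ketC j i)

/-!
For `i ≠ j`, the map `x ↦ σ_{ij} x σ_{ij} + α_{ij} x α_{ij}` pinches `x` onto the span of `|ij⟩`
and `|ji⟩`: it keeps the average of the two diagonal entries and the symmetrised coherence between
`|ij⟩` and `|ji⟩`. The partial transpose turns the coherence `⟨ij|τ^Γ|ji⟩` into `⟨ii|τ|jj⟩`, so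
`Π(τ^Γ)^Γ` splits into a diagonal matrix with entries `⟨ij|τ|ij⟩ ≥ 0` and the compression
`D (τ + τᵀ) D`. Both are positive semidefinite, and `τ* = τᵀ` because `τ` is Hermitian.
-/

open Matrix Finset

lemma Matrix.single_one_mul_mul_single_one {l m n o R : Type*} [DecidableEq l] [DecidableEq m]
    [DecidableEq n] [DecidableEq o] [Fintype m] [Fintype n] [CommSemiring R]
    (i : l) (i' : m) (j' : n) (j : o) (x : Matrix m n R) :
    single i i' (1 : R) * x * single j' j (1 : R) = x i' j' • (single i j 1 : Matrix l o R) := by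
  simp

section SumFilter

variable {ι M : Type*} [Fintype ι] [LinearOrder ι] [AddCommMonoid M]

lemma sum_filter_le_eq_sum_filter_lt_add (f : ι → ι → M) :
    ∑ i, ∑ j ∈ univ.filter (· ≤ i), f i j
      = ∑ i, ∑ j ∈ univ.filter (· < i), f i j + ∑ i, f i i := by
  rw [← sum_add_distrib]
  refine sum_congr rfl fun i _ => ?_
  have : univ.filter (· ≤ i) = insert i (univ.filter (· < i)) := by
    ext j; simp [le_iff_lt_or_eq, or_comm]
  rw [this, sum_insert (by simp), add_comm]

lemma sum_filter_lt_add_swap (f : ι → ι → M) :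
    ∑ i, ∑ j ∈ univ.filter (· < i), (f i j + f j i) = ∑ i, ∑ j ∈ univ.filter (· ≠ i), f i j := by
  have hswap : ∑ i, ∑ j ∈ univ.filter (· < i), f j i = ∑ i, ∑ j ∈ univ.filter (i < ·), f i j :=
    sum_comm' fun i j => by simp
  rw [sum_congr rfl fun i _ => sum_add_distrib, sum_add_distrib, hswap, ← sum_add_distrib]
  refine sum_congr rfl fun i _ => ?_
  have hsplit : univ.filter (· ≠ i) = univ.filter (· < i) ∪ univ.filter (i < ·) := by
    ext j; simp [lt_or_lt_iff_ne]
  rw [hsplit, sum_union (disjoint_filter.2 fun j _ hji hij => lt_asymm hji hij)]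

end SumFilter

variable {d : ℕ}

lemma ketC_eq_single (i j : Fin d) : ketC i j = Pi.single (i, j) 1 := by
  funext p; simp [ketC, Pi.single_apply]

lemma vecMulVec_ketC (i j k l : Fin d) :
    vecMulVec (ketC i j) (ketC k l) = single (i, j) (k, l) 1 := by
  rw [ketC_eq_single, ketC_eq_single, single_eq_single_vecMulVec_single]

lemma posSemidef_vecMulVec_ketC (i j : Fin d) : (vecMulVec (ketC i j) (ketC i j)).PosSemidef := by
  have hstar : star (ketC i j) = ketC i j := by
    funext p; simp [ketC, apply_ite (star : ℂ → ℂ)]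
  simpa [hstar] using posSemidef_vecMulVec_self_star (ketC i j)

lemma sum_vecMulVec_ketC_mul_mul (M : Matrix (Fin d × Fin d) (Fin d × Fin d) ℂ) :
    (∑ i, vecMulVec (ketC i i) (ketC i i)) * M * ∑ i, vecMulVec (ketC i i) (ketC i i)
      = ∑ i, ∑ j, M (i, i) (j, j) • single (i, i) (j, j) 1 := by
  simp only [vecMulVec_ketC, sum_mul, mul_sum, single_one_mul_mul_single_one]
  exact sum_comm

@[simp]
lemma ptransC_apply (M : Matrix (Fin d × Fin d) (Fin d × Fin d) ℂ) (p q : Fin d × Fin d) :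
    ptransC M p q = M (p.1, q.2) (q.1, p.2) := rfl

lemma ptransC_add (M N : Matrix (Fin d × Fin d) (Fin d × Fin d) ℂ) :
    ptransC (M + N) = ptransC M + ptransC N := rfl

lemma ptransC_smul (c : ℂ) (M : Matrix (Fin d × Fin d) (Fin d × Fin d) ℂ) :
    ptransC (c • M) = c • ptransC M := rfl

lemma ptransC_sum {ι : Type*} (s : Finset ι) (M : ι → Matrix (Fin d × Fin d) (Fin d × Fin d) ℂ) :
    ptransC (∑ k ∈ s, M k) = ∑ k ∈ s, ptransC (M k) := by
  ext p q; simp [Matrix.sum_apply]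

lemma ptransC_single (a b c e : Fin d) (v : ℂ) :
    ptransC (single (a, b) (c, e) v) = single (a, e) (c, b) v := by
  ext ⟨p1, p2⟩ ⟨q1, q2⟩
  simp only [ptransC_apply, single_apply, Prod.mk.injEq]
  grind

lemma sigmaOpC_self_mul_mul (i : Fin d) (x : Matrix (Fin d × Fin d) (Fin d × Fin d) ℂ) :
    sigmaOpC i i * x * sigmaOpC i i = single (i, i) (i, i) (x (i, i) (i, i)) := by
  simp [sigmaOpC, vecMulVec_ketC]

lemma sigmaOpC_mul_mul_add_alphaOpC_mul_mul {i j : Fin d} (h : i ≠ j)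
    (x : Matrix (Fin d × Fin d) (Fin d × Fin d) ℂ) :
    sigmaOpC i j * x * sigmaOpC i j + alphaOpC i j * x * alphaOpC i j
      = (1/2 : ℂ) • ((x (i, j) (i, j) + x (j, i) (j, i))
            • (single (i, j) (i, j) 1 + single (j, i) (j, i) 1)
          + (x (i, j) (j, i) + x (j, i) (i, j))
            • (single (i, j) (j, i) 1 + single (j, i) (i, j) 1)) := by
  simp only [sigmaOpC, alphaOpC, if_neg h, add_vecMulVec, vecMulVec_add, sub_vecMulVec,
    vecMulVec_sub, vecMulVec_ketC, add_mul, mul_add, sub_mul, mul_sub, smul_mul_assoc,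
    mul_smul_comm, single_one_mul_mul_single_one]
  module

noncomputable def pinch (x : Matrix (Fin d × Fin d) (Fin d × Fin d) ℂ) :
    Matrix (Fin d × Fin d) (Fin d × Fin d) ℂ :=
  ∑ i, ∑ j ∈ univ.filter (fun j => j ≤ i), sigmaOpC i j * x * sigmaOpC i j
    + ∑ i, ∑ j ∈ univ.filter (fun j => j < i), alphaOpC i j * x * alphaOpC i j

lemma pinch_eq (x : Matrix (Fin d × Fin d) (Fin d × Fin d) ℂ) :
    pinch x = ∑ i, sigmaOpC i i * x * sigmaOpC i i
      + ∑ i, ∑ j ∈ univ.filter (fun j => j < i),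
          (sigmaOpC i j * x * sigmaOpC i j + alphaOpC i j * x * alphaOpC i j) := by
  rw [pinch, sum_filter_le_eq_sum_filter_lt_add]
  simp only [sum_add_distrib]
  abel

noncomputable def ptransPinchTerm (τ : Matrix (Fin d × Fin d) (Fin d × Fin d) ℂ) (i j : Fin d) :
    Matrix (Fin d × Fin d) (Fin d × Fin d) ℂ :=
  (1/2 : ℂ) • (τ (i, j) (i, j) • (single (i, j) (i, j) 1 + single (j, i) (j, i) 1)
    + (τ (i, i) (j, j) + τ (j, j) (i, i)) • single (i, i) (j, j) 1)

lemma ptransC_pinch_ptransC (τ : Matrix (Fin d × Fin d) (Fin d × Fin d) ℂ) :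
    ptransC (pinch (ptransC τ)) = ∑ i, single (i, i) (i, i) (τ (i, i) (i, i))
      + ∑ i, ∑ j ∈ univ.filter (fun j => j ≠ i), ptransPinchTerm τ i j := by
  have hblock : ∀ i, ∀ j ∈ univ.filter (fun j => j < i),
      ptransC (sigmaOpC i j * ptransC τ * sigmaOpC i j + alphaOpC i j * ptransC τ * alphaOpC i j)
        = ptransPinchTerm τ i j + ptransPinchTerm τ j i := by
    intro i j hj
    rw [sigmaOpC_mul_mul_add_alphaOpC_mul_mul (mem_filter.1 hj).2.ne']
    simp only [ptransPinchTerm, ptransC_add, ptransC_smul, ptransC_single, ptransC_apply]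
    module
  rw [pinch_eq, ptransC_add, ptransC_sum, ptransC_sum, ← sum_filter_lt_add_swap]
  simp only [sigmaOpC_self_mul_mul, ptransC_single, ptransC_apply, ptransC_sum]
  rw [sum_congr rfl fun i _ => sum_congr rfl (hblock i)]

noncomputable def ptransPinchFormula (τ : Matrix (Fin d × Fin d) (Fin d × Fin d) ℂ) :
    Matrix (Fin d × Fin d) (Fin d × Fin d) ℂ :=
  (1/2 : ℂ) • (∑ i, ∑ j ∈ univ.filter (fun j => j ≠ i),
      τ (i, j) (i, j) • (vecMulVec (ketC i j) (ketC i j) + vecMulVec (ketC j i) (ketC j i)))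
    + (1/2 : ℂ) • ((∑ i, vecMulVec (ketC i i) (ketC i i)) * (τ + τ.map (starRingEnd ℂ))
      * ∑ i, vecMulVec (ketC i i) (ketC i i))

lemma ptransC_pinch_ptransC_of_isHermitian {τ : Matrix (Fin d × Fin d) (Fin d × Fin d) ℂ}
    (hτ : τ.IsHermitian) : ptransC (pinch (ptransC τ)) = ptransPinchFormula τ := by
  have hconj (i j : Fin d) : starRingEnd ℂ (τ (i, i) (j, j)) = τ (j, j) (i, i) := hτ.apply _ _
  have hsplit (f : Fin d → Fin d → Matrix (Fin d × Fin d) (Fin d × Fin d) ℂ) (i : Fin d) :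
      ∑ j, f i j = f i i + ∑ j ∈ univ.filter (fun j => j ≠ i), f i j := by
    rw [filter_ne', add_sum_erase _ _ (mem_univ i)]
  have hdiag (i : Fin d) : single (i, i) (i, i) (τ (i, i) (i, i))
      = (1/2 : ℂ) • ((τ (i, i) (i, i) + starRingEnd ℂ (τ (i, i) (i, i)))
          • single (i, i) (i, i) 1) := by
    rw [hconj, smul_single, smul_single, smul_eq_mul, smul_eq_mul]
    congr 1
    ring
  rw [ptransC_pinch_ptransC, ptransPinchFormula, sum_vecMulVec_ketC_mul_mul,
    sum_congr rfl fun i _ =>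
      hsplit (fun i j => (τ + τ.map (starRingEnd ℂ)) (i, i) (j, j) • single (i, i) (j, j) 1) i]
  simp only [Matrix.add_apply, map_apply, hdiag, hconj, vecMulVec_ketC, ptransPinchTerm, smul_sum,
    smul_add, sum_add_distrib]
  abel

lemma ptransPinchFormula_posSemidef {τ : Matrix (Fin d × Fin d) (Fin d × Fin d) ℂ}
    (hτ : τ.PosSemidef) : (ptransPinchFormula τ).PosSemidef := by
  set D : Matrix (Fin d × Fin d) (Fin d × Fin d) ℂ := ∑ i, vecMulVec (ketC i i) (ketC i i)
  have hhalf : (0 : ℂ) ≤ 1/2 := one_half_pos.le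
  have hD : D.PosSemidef := posSemidef_sum _ fun i _ => posSemidef_vecMulVec_ketC i i
  have hconj : τ.map (starRingEnd ℂ) = τᵀ := by
    ext p q; exact hτ.isHermitian.apply q p
  have hDτD := (hτ.add hτ.transpose).conjTranspose_mul_mul_same D
  rw [hD.isHermitian.eq, ← hconj] at hDτD
  refine (PosSemidef.smul (posSemidef_sum _ fun i _ => posSemidef_sum _ fun j _ => ?_) hhalf).add
    (hDτD.smul hhalf)
  exact ((posSemidef_vecMulVec_ketC i j).add (posSemidef_vecMulVec_ketC j i)).smul hτ.diag_nonneg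

/-- For the pinching map `Π(τ) = ∑_{i≥j} σ_{ij}τσ_{ij} + ∑_{i>j} α_{ij}τα_{ij}`
and every PSD `τ`, the operator `Π(τ^Γ)^Γ` is PSD; explicitly
`Π(τ^Γ)^Γ = (1/2)∑_{i≠j}⟨ij|τ|ij⟩(|ij⟩⟨ij|+|ji⟩⟨ji|) + (1/2)·D(τ+τ*)D`
with `D = ∑_i |ii⟩⟨ii|` and `τ*` the entrywise conjugate. -/
theorem stmt12 (d : ℕ)
    (Pi0 : Matrix (Fin d × Fin d) (Fin d × Fin d) ℂ → Matrix (Fin d × Fin d) (Fin d × Fin d) ℂ)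
    (hPi : ∀ x, Pi0 x
      = ∑ i, ∑ j ∈ Finset.univ.filter (fun j => j ≤ i), sigmaOpC i j * x * sigmaOpC i j
      + ∑ i, ∑ j ∈ Finset.univ.filter (fun j => j < i), alphaOpC i j * x * alphaOpC i j)
    (D : Matrix (Fin d × Fin d) (Fin d × Fin d) ℂ)
    (hD : D = ∑ i, Matrix.vecMulVec (ketC i i) (ketC i i))
    (τ : Matrix (Fin d × Fin d) (Fin d × Fin d) ℂ) (hτ : τ.PosSemidef) :
    (ptransC (Pi0 (ptransC τ))).PosSemidef ∧
    ptransC (Pi0 (ptransC τ))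
      = (1/2 : ℂ) • (∑ i, ∑ j ∈ Finset.univ.filter (fun j => j ≠ i),
          τ (i, j) (i, j) • (Matrix.vecMulVec (ketC i j) (ketC i j)
            + Matrix.vecMulVec (ketC j i) (ketC j i)))
      + (1/2 : ℂ) • (D * (τ + τ.map (starRingEnd ℂ)) * D) := by
  obtain rfl : Pi0 = pinch := funext hPi
  subst hD
  rw [ptransC_pinch_ptransC_of_isHermitian hτ.isHermitian]
  exact ⟨ptransPinchFormula_posSemidef hτ, rfl⟩
end
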